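/- If I is a right ideal of R whose extension I^e = I·R^e equals R^e, then Kdim(R/I) < m, i.e., I belongs to the m-Gabriel filter g. -/

import Mathlib

set_option linter.unusedVariables false

/-- `devLE k A` : the deviation (in the Gabriel–Rentschler sense) of the
poset `A` is `≤ k` (for `k : ℕ`).  `devLE 0 A` says every descending chain
eventually stabilizes (DCC), and `devLE (k+1) A` says that in any descending
chain all but finitely many of the factor intervals have deviation `≤ k`. -/
def devLE : ℕ → (A : Type*) → [inst : Preorder A] → Prop
  | 0, A, _ => ∀ f : ℕ → A, Antitone f → ∃ N, ∀ i, N ≤ i → f (i + 1) = f i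
  | (k+1), A, _ => ∀ f : ℕ → A, Antitone f →
      ∃ N, ∀ i, N ≤ i → devLE k (Set.Icc (f (i + 1)) (f i))

/-- The Gabriel–Rentschler Krull dimension of the right `R`-module `M`
(a module over `Rᵐᵒᵖ`) is `≤ k` : the deviation of its submodule lattice is `≤ k`. -/
def kdimLE (R M : Type*) [Ring R] [AddCommGroup M] [Module Rᵐᵒᵖ M] (k : ℕ) : Prop :=
  devLE k (Submodule Rᵐᵒᵖ M)

/-- `c` is a regular element of `R` (neither a left nor a right zero divisor). -/
def regElem (R : Type*) [Ring R] (c : R) : Prop :=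
  (∀ x : R, c * x = 0 → x = 0) ∧ (∀ x : R, x * c = 0 → x = 0)

/-- `C_m = {c ∈ R | Kdim(R/cR) < m}` (for `0 < m`, `Kdim < m` is `Kdim ≤ m-1`). -/
def rCm (R : Type*) [Ring R] (m : ℕ) : Set R :=
  {c | kdimLE R (R ⧸ Submodule.span Rᵐᵒᵖ ({c} : Set R)) (m - 1)}

/-- The m-Gabriel filter `g = {right ideals I | Kdim(R/I) < m}`. -/
def gFilt (R : Type*) [Ring R] (m : ℕ) : Set (Submodule Rᵐᵒᵖ R) :=
  {I | kdimLE R (R ⧸ I) (m - 1)}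

/-- A right ideal `P` is a (two-sided) prime ideal of `R`. -/
def isTwoSidedPrime (R : Type*) [Ring R] (P : Submodule Rᵐᵒᵖ R) : Prop :=
  (∀ a ∈ P, ∀ r : R, r * a ∈ P) ∧ P ≠ ⊤ ∧
    ∀ a b : R, (∀ r : R, a * r * b ∈ P) → a ∈ P ∨ b ∈ P

/-- `c ∈ C(P)` : `c` is regular modulo `P`. -/
def regModP (R : Type*) [Ring R] (P : Submodule Rᵐᵒᵖ R) (c : R) : Prop :=
  ∀ x : R, (c * x ∈ P → x ∈ P) ∧ (x * c ∈ P → x ∈ P)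

/-- `X_m` : the set of (two-sided) prime ideals `P` with `Kdim(R/P) = m`. -/
def xSet (R : Type*) [Ring R] (m : ℕ) : Set (Submodule Rᵐᵒᵖ R) :=
  {P | isTwoSidedPrime R P ∧ kdimLE R (R ⧸ P) m ∧ ¬ kdimLE R (R ⧸ P) (m - 1)}

/-- `V_m = ⋂_{P ∈ X_m} C(P)`. -/
def vSet (R : Type*) [Ring R] (m : ℕ) : Set R :=
  {v | ∀ P ∈ xSet R m, regModP R P v}

/-- Left multiplication by `a` as a right-module (`Rᵐᵒᵖ`-module) endomorphism of `R`. -/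
def lmulHom (R : Type*) [Ring R] (a : R) : R →ₗ[Rᵐᵒᵖ] R where
  toFun x := a * x
  map_add' x y := mul_add a x y
  map_smul' r x := by
    simp [MulOpposite.smul_eq_mul_unop, mul_assoc]

/-- `Q` is a classical right quotient ring of `R` via `f : R →+* Q` :
`f` is injective, regular elements of `R` become units in `Q`, and every
element of `Q` is a right fraction `f a * (f s)⁻¹`. -/
def isRightQuotientRing (R Q : Type*) [Ring R] [Ring Q] (f : R →+* Q) : Prop :=
  Function.Injective f ∧ (∀ s : R, regElem R s → IsUnit (f s)) ∧
    ∀ q : Q, ∃ a s : R, regElem R s ∧ q * f s = f a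

/-- `R^e = {q ∈ Q | qJ ⊆ R for some J in the m-Gabriel filter}`, as a subset of `Q`. -/
def reSet (R Q : Type*) [Ring R] [Ring Q] (f : R →+* Q) (m : ℕ) : Set Q :=
  {q | ∃ J ∈ gFilt R m, ∀ j ∈ J, ∃ r : R, q * f j = f r}

/-- The extension `A·R^e` of a set `A ⊆ R` : the additive subgroup of `Q`
generated by products `f a * q` with `a ∈ A`, `q ∈ R^e` (a right ideal of `R^e`). -/
def extSet (R Q : Type*) [Ring R] [Ring Q] (f : R →+* Q) (m : ℕ) (A : Set R) : Set Q :=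
  (AddSubgroup.closure {x : Q | ∃ a ∈ A, ∃ q ∈ reSet R Q f m, x = f a * q} : Set Q)

/-- The right `R`-module structure on `Q` induced by `f : R →+* Q`. -/
def qMod (R Q : Type*) [Ring R] [Ring Q] (f : R →+* Q) : Module Rᵐᵒᵖ Q :=
  Module.compHom Q (RingHom.op f)

/-!
Since `1 ∈ R^e = I·R^e`, write `1 = ∑ aᵢ qᵢ` with `aᵢ ∈ I` and `qᵢ Jᵢ ⊆ R` for some `Jᵢ ∈ g`;
then `J = ⋂ Jᵢ` lies in `g` and `J = 1·J ⊆ ∑ aᵢ qᵢ Jᵢ ⊆ I`, so `I ∈ g`. Everything rests on `g`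
being closed under finite intersections, which is a statement about the modular lattice of submodules:
`x ↦ ((x ⊓ a) ⊔ b, x ⊔ a)` is strictly monotone from `[a ⊓ b, ⊤]` to `[b, ⊤] × [a, ⊤]`, and
deviation does not increase along strictly monotone maps and is bounded on products.
-/

theorem devLE_of_strictMono : ∀ (k : ℕ) {A B : Type*} [PartialOrder A] [PartialOrder B]
    {e : B → A}, StrictMono e → devLE k A → devLE k B
  | 0, _, _, _, _, e, he, hA => fun f hf => by
      obtain ⟨N, hN⟩ := hA (e ∘ f) (he.monotone.comp_antitone hf)
      exact ⟨N, fun i hi => (hf i.le_succ).eq_of_not_lt fun h => (he h).ne (hN i hi)⟩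
  | k + 1, _, _, _, _, e, he, hA => fun f hf => by
      obtain ⟨N, hN⟩ := hA (e ∘ f) (he.monotone.comp_antitone hf)
      exact ⟨N, fun i hi => devLE_of_strictMono k
        (e := fun x => (⟨e x, he.monotone x.2.1, he.monotone x.2.2⟩ :
          Set.Icc (e (f (i + 1))) (e (f i))))
        (fun _ _ h => he h) (hN i hi)⟩

theorem devLE_prod : ∀ (k : ℕ) {A B : Type*} [PartialOrder A] [PartialOrder B],
    devLE k A → devLE k B → devLE k (A × B)
  | 0, _, _, _, _, hA, hB => fun f hf => by
      obtain ⟨N₁, h₁⟩ := hA (fun i => (f i).1) fun _ _ h => (hf h).1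
      obtain ⟨N₂, h₂⟩ := hB (fun i => (f i).2) fun _ _ h => (hf h).2
      exact ⟨max N₁ N₂, fun i hi =>
        Prod.ext (h₁ i (le_of_max_le_left hi)) (h₂ i (le_of_max_le_right hi))⟩
  | k + 1, _, _, _, _, hA, hB => fun f hf => by
      obtain ⟨N₁, h₁⟩ := hA (fun i => (f i).1) fun _ _ h => (hf h).1
      obtain ⟨N₂, h₂⟩ := hB (fun i => (f i).2) fun _ _ h => (hf h).2
      exact ⟨max N₁ N₂, fun i hi => devLE_of_strictMono k
        (e := fun x : Set.Icc (f (i + 1)) (f i) =>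
          ((⟨x.1.1, x.2.1.1, x.2.2.1⟩ : Set.Icc (f (i + 1)).1 (f i).1),
            (⟨x.1.2, x.2.1.2, x.2.2.2⟩ : Set.Icc (f (i + 1)).2 (f i).2)))
        (fun _ _ h => h)
        (devLE_prod k (h₁ i (le_of_max_le_left hi)) (h₂ i (le_of_max_le_right hi)))⟩

theorem devLE_of_subsingleton : ∀ (k : ℕ) (A : Type*) [Preorder A] [Subsingleton A], devLE k A
  | 0, _, _, _ => fun _ _ => ⟨0, fun _ _ => Subsingleton.elim _ _⟩
  | k + 1, _, _, _ => fun _ _ => ⟨0, fun _ _ => devLE_of_subsingleton k _⟩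

theorem devLE_Ici_inf {α : Type*} [Lattice α] [IsModularLattice α] {k : ℕ} {a b : α}
    (ha : devLE k (Set.Ici a)) (hb : devLE k (Set.Ici b)) : devLE k (Set.Ici (a ⊓ b)) := by
  refine devLE_of_strictMono k (e := fun x : Set.Ici (a ⊓ b) =>
    ((⟨x ⊓ a ⊔ b, le_sup_right⟩ : Set.Ici b), (⟨x ⊔ a, le_sup_right⟩ : Set.Ici a)))
    (fun x y hxy => ?_) (devLE_prod k hb ha)
  have hIcc : ∀ z : Set.Ici (a ⊓ b), (z : α) ⊓ a ∈ Set.Icc (a ⊓ b) a :=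
    fun z => ⟨le_inf z.2 inf_le_left, inf_le_right⟩
  obtain ⟨hinf, hsup⟩ | ⟨hinf, hsup⟩ :=
    Prod.mk_lt_mk.mp (strictMono_inf_prod_sup (z := a) (show (x : α) < y from hxy))
  · exact Prod.mk_lt_mk.mpr (Or.inl ⟨sup_strictMonoOn_Icc_inf (hIcc x) (hIcc y) hinf, hsup⟩)
  · exact Prod.mk_lt_mk.mpr (Or.inr ⟨sup_le_sup_right hinf b, hsup⟩)

section Quotient

variable {R M : Type*} [Ring R] [AddCommGroup M] [Module Rᵐᵒᵖ M] {k : ℕ}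

theorem kdimLE_quotient_iff (N : Submodule Rᵐᵒᵖ M) : kdimLE R (M ⧸ N) k ↔ devLE k (Set.Ici N) :=
  ⟨devLE_of_strictMono k (Submodule.comapMkQRelIso N).symm.strictMono,
    devLE_of_strictMono k (Submodule.comapMkQRelIso N).strictMono⟩

theorem kdimLE_quotient_top : kdimLE R (M ⧸ (⊤ : Submodule Rᵐᵒᵖ M)) k :=
  have : Subsingleton (Set.Ici (⊤ : Submodule Rᵐᵒᵖ M)) :=
    ⟨fun x y => Subtype.ext ((top_le_iff.mp x.2).trans (top_le_iff.mp y.2).symm)⟩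
  (kdimLE_quotient_iff ⊤).mpr (devLE_of_subsingleton k _)

theorem kdimLE_quotient_of_le {N N' : Submodule Rᵐᵒᵖ M} (h : N ≤ N') (hN : kdimLE R (M ⧸ N) k) :
    kdimLE R (M ⧸ N') k :=
  (kdimLE_quotient_iff N').mpr <| devLE_of_strictMono k
    (e := Set.inclusion (Set.Ici_subset_Ici.mpr h)) (fun _ _ h => h)
    ((kdimLE_quotient_iff N).mp hN)

theorem kdimLE_quotient_inf {N N' : Submodule Rᵐᵒᵖ M} (hN : kdimLE R (M ⧸ N) k)
    (hN' : kdimLE R (M ⧸ N') k) : kdimLE R (M ⧸ (N ⊓ N')) k :=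
  (kdimLE_quotient_iff _).mpr <|
    devLE_Ici_inf ((kdimLE_quotient_iff N).mp hN) ((kdimLE_quotient_iff N').mp hN')

end Quotient

section Extension

variable {R Q : Type*} [Ring R] [Ring Q] {f : R →+* Q} {m : ℕ}

theorem one_mem_reSet : (1 : Q) ∈ reSet R Q f m :=
  ⟨⊤, kdimLE_quotient_top, fun j _ => ⟨j, one_mul _⟩⟩

theorem exists_mem_gFilt_mul_mem_of_mem_extSet {I : Submodule Rᵐᵒᵖ R} {x : Q}
    (hx : x ∈ extSet R Q f m I) : ∃ J ∈ gFilt R m, ∀ j ∈ J, ∃ r ∈ I, x * f j = f r := by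
  induction hx using AddSubgroup.closure_induction with
  | mem x hx =>
    obtain ⟨a, ha, q, ⟨J, hJ, hqJ⟩, rfl⟩ := hx
    refine ⟨J, hJ, fun j hj => ?_⟩
    obtain ⟨r, hr⟩ := hqJ j hj
    exact ⟨a * r, I.smul_mem (MulOpposite.op r) ha, by rw [mul_assoc, hr, map_mul]⟩
  | zero => exact ⟨⊤, kdimLE_quotient_top, fun _ _ => ⟨0, I.zero_mem, by simp⟩⟩
  | add x y _ _ hx hy =>
    obtain ⟨Jx, hJx, hx⟩ := hx
    obtain ⟨Jy, hJy, hy⟩ := hy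
    refine ⟨Jx ⊓ Jy, kdimLE_quotient_inf hJx hJy, fun j hj => ?_⟩
    obtain ⟨rx, hrx, hxj⟩ := hx j hj.1
    obtain ⟨ry, hry, hyj⟩ := hy j hj.2
    exact ⟨rx + ry, I.add_mem hrx hry, by rw [add_mul, hxj, hyj, map_add]⟩
  | neg x _ hx =>
    obtain ⟨J, hJ, hx⟩ := hx
    refine ⟨J, hJ, fun j hj => ?_⟩
    obtain ⟨r, hr, hxj⟩ := hx j hj
    exact ⟨-r, I.neg_mem hr, by rw [neg_mul, hxj, map_neg]⟩

end Extension

theorem stmt14_general (R : Type) [Ring R] (m : ℕ) (Q : Type) [Ring Q] (f : R →+* Q)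
    (hQ : isRightQuotientRing R Q f) :
    ∀ I : Submodule Rᵐᵒᵖ R, extSet R Q f m ↑I = reSet R Q f m → I ∈ gFilt R m := by
  intro I hI
  obtain ⟨J, hJ, hJI⟩ := exists_mem_gFilt_mul_mem_of_mem_extSet (hI ▸ one_mem_reSet)
  refine kdimLE_quotient_of_le (fun j hj => ?_) hJ
  obtain ⟨r, hr, hjr⟩ := hJI j hj
  rw [one_mul] at hjr
  exact hQ.1 hjr ▸ hr

theorem stmt14 (R : Type) [Ring R] [Nontrivial R] [IsNoetherian Rᵐᵒᵖ R]
    (hprime : ∀ a b : R, (∀ r : R, a * r * b = 0) → a = 0 ∨ b = 0)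
    (n m : ℕ) (hm : 0 < m) (hmn : m < n)
    (hdim : kdimLE R R n ∧ ¬ kdimLE R R (n - 1))
    (Q : Type) [Ring Q] (f : R →+* Q) (hQ : isRightQuotientRing R Q f) :
    ∀ I : Submodule Rᵐᵒᵖ R, extSet R Q f m ↑I = reSet R Q f m → I ∈ gFilt R m :=
  stmt14_general R m Q f hQ
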